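/- Let G(z,w) = −log|z−w| − log|z−w̄| be the Neumann Green's function on ℍ, let (f̃_t) be the centered reverse Loewner flow driven by W̃_t = √κ B_t (B a standard Brownian motion), and set G̃_t(y,z) = G(f̃_t(y), f̃_t(z)) for distinct y,z ∈ ℍ. If κ = 4 (so that the relevant multiplicative factor is 1), then dG̃_t(y,z) = −Re(2/f̃_t(y)) · Re(2/f̃_t(z)) dt; more generally for κ > 0 this identity holds for the drift term computed via Itô's formula. -/

import Mathlib

open MeasureTheory ProbabilityTheory Filter Set

noncomputable section

variable {Ω : Type*} {mΩ : MeasurableSpace Ω}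

/-- `B` is a standard Brownian motion under `P`: a.s. continuous paths started at `0`,
with independent increments, the increment `B_t − B_s` being `N(0, t−s)`-distributed. -/
def IsBrownianMotion (P : Measure Ω) (B : ℝ → Ω → ℝ) : Prop :=
  (∀ᵐ ω ∂P, Continuous fun t => B t ω) ∧
  (∀ᵐ ω ∂P, B 0 ω = 0) ∧
  (∀ s t : ℝ, 0 ≤ s → s ≤ t →
    P.map (fun ω => B t ω - B s ω) = gaussianReal 0 ((t - s).toNNReal)) ∧
  (∀ (n : ℕ) (t : Fin (n + 1) → ℝ), Monotone t → 0 ≤ t 0 →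
    iIndepFun
      (fun (i : Fin n) ω => B (t i.succ) ω - B (t i.castSucc) ω) P)

/-- `Z` is a squared Bessel process of dimension `δ` started from `z0`, i.e. a
nonnegative-in-law continuous adapted solution of `dZ_t = δ dt + 2√(Z_t) dB_t`,
characterized via the martingale problem: `Z_t = z0 + δt + M_t` where `M` is a
continuous martingale with `M_0 = 0` and quadratic variation `∫_0^t 4 Z_s ds`
(i.e. `M² − ∫ 4Z` is a martingale), so that `M_t = 2∫_0^t √(Z_s) dB_s`. -/
def IsSquaredBessel (P : Measure Ω) (ℱ : Filtration ℝ mΩ) (δ z0 : ℝ)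
    (Z : ℝ → Ω → ℝ) : Prop :=
  (∀ᵐ ω ∂P, Continuous fun t => Z t ω) ∧
  (∀ᵐ ω ∂P, Z 0 ω = z0) ∧
  Adapted ℱ (fun t => Z t) ∧
  ∃ M : ℝ → Ω → ℝ,
    Martingale M ℱ P ∧
    (∀ᵐ ω ∂P, Continuous fun t => M t ω) ∧
    (∀ᵐ ω ∂P, M 0 ω = 0) ∧
    Martingale (fun t ω => (M t ω) ^ 2 - ∫ s in (0:ℝ)..t, 4 * Z s ω) ℱ P ∧
    (∀ᵐ ω ∂P, ∀ t : ℝ, 0 ≤ t → Z t ω = z0 + δ * t + M t ω)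

/-- `X` is a Bessel process of dimension `δ` started from `x ≥ 0`: the square root of a
squared Bessel process of dimension `δ` started from `x²`. -/
def IsBessel (P : Measure Ω) (ℱ : Filtration ℝ mΩ) (δ x : ℝ)
    (X : ℝ → Ω → ℝ) : Prop :=
  ∃ Z : ℝ → Ω → ℝ, IsSquaredBessel P ℱ δ (x ^ 2) Z ∧
    ∀ᵐ ω ∂P, ∀ t : ℝ, 0 ≤ t → X t ω = Real.sqrt (Z t ω)


/-- The Neumann Green's function `G(z,w) = −log|z−w| − log|z−w̄|` on the upper
half-plane. -/
def neumannGreen (z w : ℂ) : ℝ :=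
  -Real.log ‖z - w‖ - Real.log ‖z - (starRingEnd ℂ) w‖

/-! `G(z, w)` only sees `z - w` and `z - w̄`, so it is invariant under a common real
translation: the driving function `W̃_t` drops out of `G̃_t(y, z)`, which is therefore
differentiable along every path, and its martingale part vanishes. Along the reverse Loewner
flow, `g̃_t(y) - g̃_t(z)` and `g̃_t(y) - conj (g̃_t(z))` solve the linear equations
`h' = 2 h / (f̃_t(y) f̃_t(z))` and `h' = 2 h / (f̃_t(y) conj (f̃_t(z)))`, so the logarithmic
derivatives of their moduli are the real parts of these coefficients, which add up to
`Re(2/f̃_t(y)) · Re(2/f̃_t(z))`. The first difference never vanishes by uniqueness for its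
linear equation, whose coefficient stays bounded because `Im g̃_t` increases along the flow. -/

open scoped ComplexConjugate

theorem HasDerivAt.log_norm {h : ℝ → ℂ} {h' : ℂ} {t : ℝ} (hh : HasDerivAt h h' t)
    (ht : h t ≠ 0) : HasDerivAt (fun s => Real.log ‖h s‖) (h' / h t).re t := by
  have hsq : (fun s => Real.log ‖h s‖) = fun s => Real.log (‖h s‖ ^ 2) / 2 := by
    ext s; rw [Real.log_pow]; push_cast; ring
  have hpos : ‖h t‖ ^ 2 ≠ 0 := by positivity
  rw [hsq]
  refine ((hh.norm_sq.log hpos).div_const 2).congr_deriv ?_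
  rw [Complex.div_re, ← Complex.sq_norm, Complex.inner]
  simp only [Complex.mul_re, Complex.conj_re, Complex.conj_im]
  field_simp
  ring

theorem le_apply_of_hasDerivAt_pos_of_pos {y y' : ℝ → ℝ} {a t : ℝ}
    (hy : ∀ s, a ≤ s → HasDerivAt y (y' s) s) (ha : 0 < y a)
    (hy' : ∀ s, a ≤ s → 0 < y s → 0 < y' s) (ht : a ≤ t) : y a ≤ y t := by
  have key := image_le_of_deriv_right_lt_deriv_boundary (f := fun s => -y s)
    (f' := fun s => -y' s) (a := a) (b := t) (B := fun _ => -y a) (B' := 0)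
    (fun s hs => (hy s hs.1).continuousAt.neg.continuousWithinAt)
    (fun s hs => (hy s hs.1).neg.hasDerivWithinAt) le_rfl (fun _ => hasDerivAt_const _ _)
    (fun s hs hys => by simpa using hy' s hs.1 (neg_inj.mp hys ▸ ha)) ⟨ht, le_rfl⟩
  simpa using key

theorem ne_zero_of_hasDerivAt_mul_self {h c : ℝ → ℂ} {a b K : ℝ} (hab : a ≤ b)
    (hc : ∀ s ∈ Icc a b, ‖c s‖ ≤ K) (hh : ∀ s ∈ Icc a b, HasDerivAt h (c s * h s) s)
    (ha : h a ≠ 0) : h b ≠ 0 := by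
  intro hb
  refine ha (ODE_solution_unique_of_mem_Icc_left (v := fun s x => c s * x) (s := fun _ => univ)
    (K := K.toNNReal) (g := fun _ => 0) (fun s hs => ?_)
    (fun s hs => (hh s hs).continuousAt.continuousWithinAt)
    (fun s hs => (hh s (Ioc_subset_Icc_self hs)).hasDerivWithinAt) (fun _ _ => trivial)
    continuousOn_const (fun s _ => by simpa using hasDerivWithinAt_const s (Iic s) (0 : ℂ))
    (fun _ _ => trivial) hb ⟨le_rfl, hab⟩)
  have hcK : ‖c s‖₊ ≤ K.toNNReal := by
    rw [← NNReal.coe_le_coe, coe_nnnorm]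
    exact (hc s (Ioc_subset_Icc_self hs)).trans (Real.le_coe_toNNReal K)
  exact ((lipschitzWith_smul (c s)).weaken hcK).lipschitzOnWith

theorem Complex.re_two_div_mul_add_re_two_div_mul_conj (a b : ℂ) :
    (2 / (a * b)).re + (2 / (a * conj b)).re = (2 / a).re * (2 / b).re := by
  have hsum : 2 / (a * b) + 2 / (a * conj b) = 2 / a * (1 / b + conj (1 / b)) := by
    rw [map_div₀, map_one]; ring
  have hre : (2 / b).re = 2 * (1 / b).re := by
    rw [show (2 : ℂ) / b = (2 : ℝ) * (1 / b) by push_cast; ring, Complex.re_ofReal_mul]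
  rw [← Complex.add_re, hsum, Complex.add_conj, hre, Complex.re_mul_ofReal]

theorem Complex.sub_ofReal_ne_zero_of_im_pos {u : ℂ} (w : ℝ) (hu : 0 < u.im) : u - w ≠ 0 :=
  fun h => hu.ne' (by simpa using congrArg Complex.im h)

theorem neumannGreen_sub_ofReal (u v : ℂ) (w : ℝ) :
    neumannGreen (u - w) (v - w) = neumannGreen u v := by
  simp only [neumannGreen, map_sub, Complex.conj_ofReal, sub_sub_sub_cancel_right]

-- `f t` stands for `g̃_t(w)`; the centred flow `f̃_t(w)` is `f t - W t`.
def IsReverseLoewnerSolution (W : ℝ → ℝ) (f : ℝ → ℂ) : Prop :=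
  ∀ t, 0 ≤ t → HasDerivAt f (-2 / (f t - W t)) t

namespace IsReverseLoewnerSolution

variable {W : ℝ → ℝ} {f g : ℝ → ℂ} {t : ℝ}

theorem hasDerivAt_im (hf : IsReverseLoewnerSolution W f) (ht : 0 ≤ t) :
    HasDerivAt (fun s => (f s).im) (2 * (f t).im / Complex.normSq (f t - W t)) t := by
  refine (Complex.imCLM.hasFDerivAt.comp_hasDerivAt t (hf t ht)).congr_deriv ?_
  simp [Complex.div_im]
  ring

theorem im_le_im (hf : IsReverseLoewnerSolution W f) (h0 : 0 < (f 0).im) (ht : 0 ≤ t) :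
    (f 0).im ≤ (f t).im :=
  le_apply_of_hasDerivAt_pos_of_pos (fun s hs => hf.hasDerivAt_im hs) h0
    (fun s _ hs => div_pos (by linarith) (Complex.normSq_pos.2
      (Complex.sub_ofReal_ne_zero_of_im_pos _ hs))) ht

theorem im_pos (hf : IsReverseLoewnerSolution W f) (h0 : 0 < (f 0).im) (ht : 0 ≤ t) :
    0 < (f t).im :=
  h0.trans_le (hf.im_le_im h0 ht)

theorem im_le_norm_sub_ofReal (hf : IsReverseLoewnerSolution W f) (h0 : 0 < (f 0).im)
    (ht : 0 ≤ t) : (f 0).im ≤ ‖f t - W t‖ :=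
  (hf.im_le_im h0 ht).trans (by simpa using Complex.im_le_norm (f t - W t))

theorem hasDerivAt_sub (hf : IsReverseLoewnerSolution W f) (hg : IsReverseLoewnerSolution W g)
    (ht : 0 ≤ t) (hft : f t - W t ≠ 0) (hgt : g t - W t ≠ 0) :
    HasDerivAt (fun s => f s - g s) (2 / ((f t - W t) * (g t - W t)) * (f t - g t)) t :=
  ((hf t ht).sub (hg t ht)).congr_deriv (by field_simp; ring)

theorem hasDerivAt_sub_conj (hf : IsReverseLoewnerSolution W f)
    (hg : IsReverseLoewnerSolution W g) (ht : 0 ≤ t) (hft : f t - W t ≠ 0)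
    (hgt : g t - W t ≠ 0) :
    HasDerivAt (fun s => f s - conj (g s))
      (2 / ((f t - W t) * conj (g t - W t)) * (f t - conj (g t))) t := by
  have hgt' : conj (g t) - W t ≠ 0 := by simpa using (map_ne_zero (starRingEnd ℂ)).2 hgt
  refine ((hf t ht).sub (hg t ht).star).congr_deriv ?_
  rw [map_sub, Complex.conj_ofReal]
  simp only [star_div₀, star_neg, star_ofNat, star_sub, Complex.star_def, Complex.conj_ofReal]
  field_simp
  ring

theorem apply_ne (hf : IsReverseLoewnerSolution W f) (hg : IsReverseLoewnerSolution W g)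
    (hf0 : 0 < (f 0).im) (hg0 : 0 < (g 0).im) (hfg : f 0 ≠ g 0) (ht : 0 ≤ t) :
    f t ≠ g t := by
  rw [← sub_ne_zero]
  refine ne_zero_of_hasDerivAt_mul_self (h := fun s => f s - g s)
    (K := 2 / ((f 0).im * (g 0).im)) ht (fun s hs => ?_)
    (fun s hs => hf.hasDerivAt_sub hg hs.1 ?_ ?_) (sub_ne_zero.2 hfg)
  · rw [norm_div, norm_mul, Complex.norm_ofNat]
    gcongr
    exacts [hf.im_le_norm_sub_ofReal hf0 hs.1, hg.im_le_norm_sub_ofReal hg0 hs.1]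
  · exact Complex.sub_ofReal_ne_zero_of_im_pos _ (hf.im_pos hf0 hs.1)
  · exact Complex.sub_ofReal_ne_zero_of_im_pos _ (hg.im_pos hg0 hs.1)

theorem apply_ne_conj (hf : IsReverseLoewnerSolution W f) (hg : IsReverseLoewnerSolution W g)
    (hf0 : 0 < (f 0).im) (hg0 : 0 < (g 0).im) (ht : 0 ≤ t) : f t ≠ conj (g t) := by
  rw [← sub_ne_zero]
  refine fun h => (add_pos (hf.im_pos hf0 ht) (hg.im_pos hg0 ht)).ne' ?_
  simpa using congrArg Complex.im h

theorem hasDerivAt_neumannGreen (hf : IsReverseLoewnerSolution W f)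
    (hg : IsReverseLoewnerSolution W g) (hf0 : 0 < (f 0).im) (hg0 : 0 < (g 0).im)
    (hfg : f 0 ≠ g 0) (ht : 0 ≤ t) :
    HasDerivAt (fun s => neumannGreen (f s - W s) (g s - W s))
      (-((2 / (f t - W t)).re * (2 / (g t - W t)).re)) t := by
  have hft := Complex.sub_ofReal_ne_zero_of_im_pos (W t) (hf.im_pos hf0 ht)
  have hgt := Complex.sub_ofReal_ne_zero_of_im_pos (W t) (hg.im_pos hg0 ht)
  have hne := sub_ne_zero.2 (hf.apply_ne hg hf0 hg0 hfg ht)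
  have hne_conj := sub_ne_zero.2 (hf.apply_ne_conj hg hf0 hg0 ht)
  have hdiff := (hf.hasDerivAt_sub hg ht hft hgt).log_norm hne
  have hrefl := (hf.hasDerivAt_sub_conj hg ht hft hgt).log_norm hne_conj
  simp only [neumannGreen_sub_ofReal]
  refine (hdiff.neg.sub hrefl).congr_deriv ?_
  rw [mul_div_cancel_right₀ _ hne, mul_div_cancel_right₀ _ hne_conj,
    ← Complex.re_two_div_mul_add_re_two_div_mul_conj]
  ring

end IsReverseLoewnerSolution

theorem greens_function_evolution_general (P : Measure Ω)
    (W : ℝ → Ω → ℝ)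
    (g : ℝ → Ω → ℂ → ℂ)
    (hLoewner : ∀ᵐ ω ∂P, ∀ w : ℂ, 0 < w.im → g 0 ω w = w ∧
      ∀ t : ℝ, 0 ≤ t →
        HasDerivAt (fun s => g s ω w) (-2 / (g t ω w - (W t ω : ℂ))) t)
    (y z : ℂ) (hy : 0 < y.im) (hz : 0 < z.im) (hyz : y ≠ z) :
    ∀ᵐ ω ∂P, ∀ t : ℝ, 0 ≤ t →
      HasDerivAt
        (fun s => neumannGreen (g s ω y - (W s ω : ℂ)) (g s ω z - (W s ω : ℂ)))
        (-((2 / (g t ω y - (W t ω : ℂ))).re * (2 / (g t ω z - (W t ω : ℂ))).re)) t := by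
  filter_upwards [hLoewner] with ω hL t ht
  obtain ⟨hy0, hgy⟩ := hL y hy
  obtain ⟨hz0, hgz⟩ := hL z hz
  exact IsReverseLoewnerSolution.hasDerivAt_neumannGreen (W := fun s => W s ω) hgy hgz
    (by rwa [hy0]) (by rwa [hz0]) (by rwa [hy0, hz0]) ht

/-- Let `(f̃_t)` be the centered reverse Loewner flow `f̃_t = g̃_t − W̃_t` driven by
`W̃_t = √κ B_t` with `B` a standard Brownian motion and `κ > 0`, and set
`G̃_t(y,z) = G(f̃_t(y), f̃_t(z))` for distinct `y, z ∈ ℍ`.  Then almost surely the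
semimartingale decomposition of `G̃_t(y,z)` has vanishing martingale part and drift
`−Re(2/f̃_t(y))·Re(2/f̃_t(z)) dt`; that is, a.s. for all `t ≥ 0`,
`dG̃_t(y,z) = −Re(2/f̃_t(y))·Re(2/f̃_t(z)) dt`.  (For `κ = 4` this is exactly the
statement that the relevant multiplicative factor is `1`.) -/
theorem greens_function_evolution (P : Measure Ω) [IsProbabilityMeasure P]
    (κ : ℝ) (hκ : 0 < κ) (B : ℝ → Ω → ℝ) (hB : IsBrownianMotion P B)
    (W : ℝ → Ω → ℝ) (hW : ∀ t ω, W t ω = Real.sqrt κ * B t ω)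
    (g : ℝ → Ω → ℂ → ℂ)
    (hLoewner : ∀ᵐ ω ∂P, ∀ w : ℂ, 0 < w.im → g 0 ω w = w ∧
      ∀ t : ℝ, 0 ≤ t →
        HasDerivAt (fun s => g s ω w) (-2 / (g t ω w - (W t ω : ℂ))) t)
    (y z : ℂ) (hy : 0 < y.im) (hz : 0 < z.im) (hyz : y ≠ z) :
    ∀ᵐ ω ∂P, ∀ t : ℝ, 0 ≤ t →
      HasDerivAt
        (fun s => neumannGreen (g s ω y - (W s ω : ℂ)) (g s ω z - (W s ω : ℂ)))
        (-((2 / (g t ω y - (W t ω : ℂ))).re * (2 / (g t ω z - (W t ω : ℂ))).re)) t :=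
  greens_function_evolution_general P W g hLoewner y z hy hz hyz

end
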